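/- Suppose that σ₀ := σ_min(J_g(θ₀)) > 0 and that σ_min(J_g(θ(t))) ≥ σ₀/2 for all t ≥ 0. Then for all t ≥ 0, ∫₀^t ‖θ'(s)‖ ds ≤ (2/(σ₀·σ_F))·(ψ(L(y(0))) − ψ(L(y(t)))) ≤ (2/(σ₀·σ_F))·ψ(L(y(0))); in particular ‖θ'(·)‖ ∈ L¹([0,∞)) and θ(t) converges to a limit θ∞ ∈ ℝ^p as t → ∞. -/

import Mathlib

/-!
Along the flow the loss `φ t = L (y t)` satisfies `φ' = -‖θ'‖²`, and by the chain rule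
`θ' = -J_g* J_F* ∇L(y)`, so the two singular-value bounds give `‖θ'‖ ≥ (σ₀ σ_F / 2) ‖∇L(y)‖`.
With the KL inequality this makes `ψ (φ t) + (σ₀ σ_F / 2) ∫₀ᵗ ‖θ'‖` nonincreasing while `φ > 0`;
once `φ` vanishes, `y` minimises `L`, so `∇L(y) = 0` and the flow is at rest. The resulting
bound on the length of the trajectory makes `θ'` integrable on `[0, ∞)`, hence `θ` converges.
-/

open Filter MeasureTheory ProbabilityTheory
open scoped Topology NNReal

noncomputable def sigmaMin {E F : Type*} [NormedAddCommGroup E] [InnerProductSpace ℝ E]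
    [CompleteSpace E] [NormedAddCommGroup F] [InnerProductSpace ℝ F] [CompleteSpace F]
    (A : E →L[ℝ] F) : ℝ :=
  ⨅ w : {w : F // ‖w‖ = 1}, ‖ContinuousLinearMap.adjoint A w.1‖

open Set ContinuousLinearMap

section InnerProduct

variable {E F G : Type*} [NormedAddCommGroup E] [InnerProductSpace ℝ E] [CompleteSpace E]
  [NormedAddCommGroup F] [InnerProductSpace ℝ F] [CompleteSpace F]
  [NormedAddCommGroup G] [InnerProductSpace ℝ G] [CompleteSpace G]

theorem sigmaMin_mul_norm_le (A : E →L[ℝ] F) (w : F) : sigmaMin A * ‖w‖ ≤ ‖adjoint A w‖ := by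
  rcases eq_or_ne w 0 with rfl | hw
  · simp
  have hw' : 0 < ‖w‖ := norm_pos_iff.2 hw
  have hunit : ‖‖w‖⁻¹ • w‖ = 1 := by rw [norm_smul, norm_inv, norm_norm, inv_mul_cancel₀ hw'.ne']
  have hbdd : BddBelow (range fun u : {u : F // ‖u‖ = 1} => ‖adjoint A u.1‖) :=
    ⟨0, by rintro _ ⟨u, rfl⟩; exact norm_nonneg _⟩
  have h := ciInf_le hbdd ⟨_, hunit⟩
  rw [map_smul, norm_smul, norm_inv, norm_norm] at h
  rwa [← le_div_iff₀ hw', div_eq_inv_mul]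

theorem mul_mul_norm_le_norm_adjoint_adjoint {A : E →L[ℝ] F} {B : F →L[ℝ] G} {z : G} {a b : ℝ}
    (ha : 0 ≤ a) (hA : a ≤ sigmaMin A) (hB : b * ‖z‖ ≤ ‖adjoint B z‖) :
    a * b * ‖z‖ ≤ ‖adjoint A (adjoint B z)‖ :=
  calc a * b * ‖z‖ = a * (b * ‖z‖) := mul_assoc _ _ _
    _ ≤ a * ‖adjoint B z‖ := mul_le_mul_of_nonneg_left hB ha
    _ ≤ sigmaMin A * ‖adjoint B z‖ := mul_le_mul_of_nonneg_right hA (norm_nonneg _)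
    _ ≤ _ := sigmaMin_mul_norm_le _ _

theorem gradient_comp {f : F → ℝ} {h : E → F} {x : E} (hf : DifferentiableAt ℝ f (h x))
    (hh : DifferentiableAt ℝ h x) :
    gradient (f ∘ h) x = adjoint (fderiv ℝ h x) (gradient f (h x)) := by
  refine ext_inner_right ℝ fun v => ?_
  rw [inner_gradient_left, fderiv_comp x hf hh, adjoint_inner_left, inner_gradient_left]
  rfl

theorem gradient_comp_comp {f : G → ℝ} {k : F → G} {h : E → F} {x : E}
    (hf : DifferentiableAt ℝ f (k (h x))) (hk : DifferentiableAt ℝ k (h x))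
    (hh : DifferentiableAt ℝ h x) :
    gradient (fun y => f (k (h y))) x =
      adjoint (fderiv ℝ h x) (adjoint (fderiv ℝ k (h x)) (gradient f (k (h x)))) := by
  rw [show (fun y => f (k (h y))) = (f ∘ k) ∘ h from rfl, gradient_comp _ hh,
    gradient_comp hf hk]
  exact hf.comp _ hk

theorem IsMinOn.gradient_eq_zero {f : E → ℝ} {x : E} (h : IsMinOn f univ x) :
    gradient f x = 0 := by
  rw [gradient, (h.isLocalMin univ_mem).fderiv_eq_zero, map_zero]

theorem HasDerivAt.hasDerivAt_comp_of_eq_neg_gradient {f : E → ℝ} {θ : ℝ → E} {v : E} {t : ℝ}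
    (hθ : HasDerivAt θ v t) (hf : DifferentiableAt ℝ f (θ t)) (hv : v = -gradient f (θ t)) :
    HasDerivAt (fun s => f (θ s)) (-‖v‖ ^ 2) t := by
  have hv' : fderiv ℝ f (θ t) v = -‖v‖ ^ 2 := by
    rw [← inner_gradient_left, ← neg_neg (gradient f (θ t)), ← hv, inner_neg_left,
      real_inner_self_eq_norm_sq]
  rw [← hv']
  exact hf.hasFDerivAt.comp_hasDerivAt t hθ

end InnerProduct

theorem le_mul_of_one_le_mul_of_mul_le {c p r s : ℝ} (hc : 0 ≤ c) (hr : 0 ≤ r) (h1 : 1 ≤ p * r)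
    (h : c * r ≤ s) : c ≤ p * s := by
  have hp : 0 ≤ p := (pos_of_mul_pos_left (one_pos.trans_le h1) hr).le
  nlinarith [mul_le_mul_of_nonneg_left h hp]

section KLLength

variable {φ v ψ ψ' : ℝ → ℝ} {r₀ c : ℝ}

theorem antitoneOn_Ici_of_hasDerivAt_neg_sq (hφ : ∀ t ≥ 0, HasDerivAt φ (-v t ^ 2) t) :
    AntitoneOn φ (Ici 0) :=
  antitoneOn_of_hasDerivWithinAt_nonpos (convex_Ici 0)
    (fun t ht => (hφ t ht).continuousAt.continuousWithinAt)
    (fun t ht => (hφ t (interior_subset ht)).hasDerivWithinAt)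
    (fun _ _ => neg_nonpos.2 (sq_nonneg _))

theorem mul_integral_le_sub_of_kl_of_pos (hφ : ∀ t ≥ 0, HasDerivAt φ (-v t ^ 2) t)
    (hφ0 : ∀ t, 0 ≤ φ t) (hφr : φ 0 < r₀) (hv : ContinuousOn v (Ici 0)) (hv0 : ∀ t, 0 ≤ v t)
    (hψ : ContinuousOn ψ (Ico 0 r₀)) (hψ' : ∀ s ∈ Ioo 0 r₀, HasDerivAt ψ (ψ' s) s)
    (hKL : ∀ t ≥ 0, 0 < φ t → φ t < r₀ → c ≤ ψ' (φ t) * v t)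
    {T : ℝ} (hT : 0 ≤ T) (hpos : ∀ t ∈ Ioo 0 T, 0 < φ t) :
    c * ∫ s in 0..T, v s ≤ ψ (φ 0) - ψ (φ T) := by
  have hanti := antitoneOn_Ici_of_hasDerivAt_neg_sq hφ
  have hlt : ∀ t ≥ 0, φ t < r₀ := fun t ht => (hanti self_mem_Ici ht ht).trans_lt hφr
  have hsub : Icc 0 T ⊆ Ici 0 := Icc_subset_Ici_self
  have hcont : ContinuousOn (fun t => ψ (φ t)) (Icc 0 T) :=
    hψ.comp (fun t ht => (hφ t (hsub ht)).continuousAt.continuousWithinAt)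
      fun t ht => ⟨hφ0 t, hlt t (hsub ht)⟩
  have hderiv : ∀ t ∈ Ioo 0 T,
      HasDerivWithinAt (fun t => ψ (φ t)) (ψ' (φ t) * -v t ^ 2) (Ioi t) t := fun t ht =>
    ((hψ' _ ⟨hpos t ht, hlt t ht.1.le⟩).comp t (hφ t ht.1.le)).hasDerivWithinAt
  have hdecay : ∀ t ∈ Ioo 0 T, ψ' (φ t) * -v t ^ 2 ≤ -(c * v t) := fun t ht => by
    nlinarith [mul_le_mul_of_nonneg_right (hKL t ht.1.le (hpos t ht) (hlt t ht.1.le)) (hv0 t)]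
  have key := intervalIntegral.sub_le_integral_of_hasDeriv_right_of_le hT hcont hderiv
    (((hv.mono hsub).integrableOn_compact isCompact_Icc).const_mul c).neg hdecay
  simp only [Pi.neg_apply, intervalIntegral.integral_neg, intervalIntegral.integral_const_mul]
    at key
  linarith

theorem mul_integral_le_sub_of_kl (hφ : ∀ t ≥ 0, HasDerivAt φ (-v t ^ 2) t)
    (hφ0 : ∀ t, 0 ≤ φ t) (hφr : φ 0 < r₀) (hv : ContinuousOn v (Ici 0)) (hv0 : ∀ t, 0 ≤ v t)
    (hψ : ContinuousOn ψ (Ico 0 r₀)) (hψ' : ∀ s ∈ Ioo 0 r₀, HasDerivAt ψ (ψ' s) s)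
    (hKL : ∀ t ≥ 0, 0 < φ t → φ t < r₀ → c ≤ ψ' (φ t) * v t)
    (hhalt : ∀ t ≥ 0, φ t = 0 → v t = 0) {T : ℝ} (hT : 0 ≤ T) :
    c * ∫ s in 0..T, v s ≤ ψ (φ 0) - ψ (φ T) := by
  by_cases hzero : (Icc 0 T ∩ φ ⁻¹' {0}).Nonempty
  swap
  · refine mul_integral_le_sub_of_kl_of_pos hφ hφ0 hφr hv hv0 hψ hψ' hKL hT fun t ht => ?_
    exact (hφ0 t).lt_of_ne fun h => hzero ⟨t, Ioo_subset_Icc_self ht, h.symm⟩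
  have hφc : ContinuousOn φ (Icc 0 T) := fun t ht =>
    (hφ t ht.1).continuousAt.continuousWithinAt
  obtain ⟨t₀, ⟨⟨ht₀, ht₀T⟩, hφt₀ : φ t₀ = 0⟩, hleast⟩ :=
    (isCompact_Icc.of_isClosed_subset (hφc.preimage_isClosed_of_isClosed isClosed_Icc
      isClosed_singleton) inter_subset_left).exists_isLeast hzero
  -- `t₀` is the first zero of `φ`: the positive case applies before it, and `v = 0` after it.
  have hbefore := mul_integral_le_sub_of_kl_of_pos hφ hφ0 hφr hv hv0 hψ hψ' hKL ht₀
    fun t ht => (hφ0 t).lt_of_ne fun h =>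
      (hleast ⟨⟨ht.1.le, ht.2.le.trans ht₀T⟩, h.symm⟩).not_gt ht.2
  have hanti := antitoneOn_Ici_of_hasDerivAt_neg_sq hφ
  have hrest : ∀ t ∈ Icc t₀ T, φ t = 0 := fun t ht =>
    le_antisymm (hφt₀ ▸ hanti (mem_Ici.2 ht₀) (mem_Ici.2 (ht₀.trans ht.1)) ht.1) (hφ0 t)
  have hvi : ∀ a b : ℝ, 0 ≤ a → 0 ≤ b → IntervalIntegrable v volume a b := fun a b ha hb =>
    (hv.mono fun t ht => (le_min ha hb).trans ht.1).intervalIntegrable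
  have hafter : ∫ s in t₀..T, v s = 0 := by
    rw [intervalIntegral.integral_congr (g := fun _ => 0), intervalIntegral.integral_zero]
    intro t ht
    rw [uIcc_of_le ht₀T] at ht
    exact hhalt t (ht₀.trans ht.1) (hrest t ht)
  rw [← intervalIntegral.integral_add_adjacent_intervals (hvi 0 t₀ le_rfl ht₀)
    (hvi t₀ T ht₀ (ht₀.trans ht₀T)), hafter, add_zero, hrest T ⟨ht₀T, le_rfl⟩]
  rwa [hφt₀] at hbefore

end KLLength

theorem integrableOn_Ioi_of_intervalIntegral_norm_le {E : Type*} [NormedAddCommGroup E]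
    {f : ℝ → E} {a M : ℝ} (hf : ContinuousOn f (Ici a)) (hM : ∀ T ≥ a, ∫ s in a..T, ‖f s‖ ≤ M) :
    IntegrableOn f (Ioi a) :=
  integrableOn_Ioi_of_intervalIntegral_norm_bounded M a
    (fun _ => ((hf.mono Icc_subset_Ici_self).integrableOn_compact isCompact_Icc).mono_set
      Ioc_subset_Icc_self) tendsto_id ((eventually_ge_atTop a).mono hM)

theorem stmt2_general
    {n m p : ℕ}
    (L : EuclideanSpace ℝ (Fin m) → ℝ)
    (F : EuclideanSpace ℝ (Fin n) → EuclideanSpace ℝ (Fin m))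
    (g : EuclideanSpace ℝ (Fin p) → EuclideanSpace ℝ (Fin n))
    (hL : ContDiff ℝ 1 L)
    (hLnonneg : ∀ v, 0 ≤ L v)
    (hF : ContDiff ℝ 1 F)
    (hg : ContDiff ℝ 1 g)
    (θ θ' : ℝ → EuclideanSpace ℝ (Fin p))
    (hθd : ∀ t ≥ (0:ℝ), HasDerivAt θ (θ' t) t)
    (hθcont : ContinuousOn θ' (Set.Ici 0))
    (hflow : ∀ t ≥ (0:ℝ), θ' t = -gradient (fun q => L (F (g q))) (θ t))
    (r₀ : ℝ) (hr₀ : L (F (g (θ 0))) < r₀)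
    (ψ ψ' : ℝ → ℝ) (hψ0 : ψ 0 = 0)
    (hψcont : ContinuousOn ψ (Set.Ico 0 r₀))
    (hψmono : StrictMonoOn ψ (Set.Ico 0 r₀))
    (hψd : ∀ s ∈ Set.Ioo (0:ℝ) r₀, HasDerivAt ψ (ψ' s) s)
    (hKL : ∀ v : EuclideanSpace ℝ (Fin m), 0 < L v → L v < r₀ →
      1 ≤ ψ' (L v) * ‖gradient L v‖)
    (σF : ℝ) (hσF : 0 < σF)
    (hinj : ∀ t ≥ (0:ℝ),
      gradient L (F (g (θ t))) ∈ LinearMap.range (fderiv ℝ F (g (θ t)) :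
          EuclideanSpace ℝ (Fin n) →ₗ[ℝ] EuclideanSpace ℝ (Fin m)) ∧
      ∀ z ∈ LinearMap.range (fderiv ℝ F (g (θ t)) :
          EuclideanSpace ℝ (Fin n) →ₗ[ℝ] EuclideanSpace ℝ (Fin m)),
        σF * ‖z‖ ≤ ‖ContinuousLinearMap.adjoint (fderiv ℝ F (g (θ t))) z‖)
    (σ₀ : ℝ) (hσ₀pos : 0 < σ₀)
    (hσt : ∀ t ≥ (0:ℝ), σ₀ / 2 ≤ sigmaMin (fderiv ℝ g (θ t))) :
    (∀ t ≥ (0:ℝ),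
      (∫ s in (0:ℝ)..t, ‖θ' s‖) ≤
        2 / (σ₀ * σF) * (ψ (L (F (g (θ 0)))) - ψ (L (F (g (θ t))))) ∧
      2 / (σ₀ * σF) * (ψ (L (F (g (θ 0)))) - ψ (L (F (g (θ t))))) ≤
        2 / (σ₀ * σF) * ψ (L (F (g (θ 0))))) ∧
    MeasureTheory.IntegrableOn (fun s => ‖θ' s‖) (Set.Ici 0) ∧
    ∃ θlim : EuclideanSpace ℝ (Fin p), Tendsto θ atTop (𝓝 θlim) := by
  obtain ⟨hLd, hFd, hgd⟩ := And.intro (hL.differentiable one_ne_zero)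
    (And.intro (hF.differentiable one_ne_zero) (hg.differentiable one_ne_zero))
  have hθ' : ∀ t ≥ (0:ℝ), θ' t = -adjoint (fderiv ℝ g (θ t))
      (adjoint (fderiv ℝ F (g (θ t))) (gradient L (F (g (θ t))))) := fun t ht => by
    rw [hflow t ht, gradient_comp_comp (hLd _) (hFd _) (hgd _)]
  have hdecay : ∀ t ≥ (0:ℝ), HasDerivAt (fun s => L (F (g (θ s)))) (-‖θ' t‖ ^ 2) t :=
    fun t ht => (hθd t ht).hasDerivAt_comp_of_eq_neg_gradient
      ((hLd _).comp _ ((hFd _).comp _ (hgd _))) (hflow t ht)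
  have hKL' : ∀ t ≥ (0:ℝ), 0 < L (F (g (θ t))) → L (F (g (θ t))) < r₀ →
      σ₀ / 2 * σF ≤ ψ' (L (F (g (θ t)))) * ‖θ' t‖ := fun t ht h0 hr =>
    le_mul_of_one_le_mul_of_mul_le (by positivity) (norm_nonneg _) (hKL _ h0 hr) <| by
      rw [hθ' t ht, norm_neg]
      exact mul_mul_norm_le_norm_adjoint_adjoint (by positivity) (hσt t ht)
        ((hinj t ht).2 _ (hinj t ht).1)
  have hhalt : ∀ t ≥ (0:ℝ), L (F (g (θ t))) = 0 → ‖θ' t‖ = 0 := fun t ht h0 => by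
    have : gradient L (F (g (θ t))) = 0 := IsMinOn.gradient_eq_zero fun v _ => h0 ▸ hLnonneg v
    rw [hθ' t ht, this, map_zero, map_zero, neg_zero, norm_zero]
  have hlen : ∀ t ≥ (0:ℝ), σ₀ / 2 * σF * ∫ s in (0:ℝ)..t, ‖θ' s‖ ≤
      ψ (L (F (g (θ 0)))) - ψ (L (F (g (θ t)))) := fun t ht =>
    mul_integral_le_sub_of_kl hdecay (fun _ => hLnonneg _) hr₀ hθcont.norm (fun _ => norm_nonneg _)
      hψcont hψd hKL' hhalt ht
  have hψnonneg : ∀ t ≥ (0:ℝ), 0 ≤ ψ (L (F (g (θ t)))) := fun t ht => hψ0 ▸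
    hψmono.monotoneOn ⟨le_rfl, (hLnonneg _).trans_lt hr₀⟩
      ⟨hLnonneg _, (antitoneOn_Ici_of_hasDerivAt_neg_sq hdecay self_mem_Ici ht ht).trans_lt hr₀⟩
      (hLnonneg _)
  have hbound : ∀ t ≥ (0:ℝ), (∫ s in (0:ℝ)..t, ‖θ' s‖) ≤
        2 / (σ₀ * σF) * (ψ (L (F (g (θ 0)))) - ψ (L (F (g (θ t))))) ∧
      2 / (σ₀ * σF) * (ψ (L (F (g (θ 0)))) - ψ (L (F (g (θ t))))) ≤
        2 / (σ₀ * σF) * ψ (L (F (g (θ 0)))) := fun t ht =>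
    ⟨by rw [div_mul_eq_mul_div, le_div_iff₀ (by positivity)]; linarith [hlen t ht],
      mul_le_mul_of_nonneg_left (by linarith [hψnonneg t ht]) (by positivity)⟩
  have hint := integrableOn_Ioi_of_intervalIntegral_norm_le hθcont fun t ht =>
    (hbound t ht).1.trans (hbound t ht).2
  exact ⟨hbound, (integrableOn_Ici_iff_integrableOn_Ioi).2 hint.norm, _,
    tendsto_limUnder_of_hasDerivAt_of_integrableOn_Ioi (fun t ht => hθd t (le_of_lt ht)) hint⟩

theorem stmt2
    {n m p : ℕ} (hn : 0 < n) (hm : 0 < m) (hp : 0 < p)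
    (L : EuclideanSpace ℝ (Fin m) → ℝ)
    (F : EuclideanSpace ℝ (Fin n) → EuclideanSpace ℝ (Fin m))
    (g : EuclideanSpace ℝ (Fin p) → EuclideanSpace ℝ (Fin n))
    (hL : ContDiff ℝ 1 L)
    (hLnonneg : ∀ v, 0 ≤ L v) (hLmin : ∃ v, L v = 0)
    (hLgrad : ∀ s : Set (EuclideanSpace ℝ (Fin m)), Bornology.IsBounded s →
      ∃ K : ℝ≥0, LipschitzOnWith K (fun v => gradient L v) s)
    (hF : ContDiff ℝ 1 F)
    (hJF : ∀ s : Set (EuclideanSpace ℝ (Fin n)), Bornology.IsBounded s →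
      ∃ K : ℝ≥0, LipschitzOnWith K (fun x => fderiv ℝ F x) s)
    (hg : ContDiff ℝ 1 g)
    (hJg : ∀ s : Set (EuclideanSpace ℝ (Fin p)), Bornology.IsBounded s →
      ∃ K : ℝ≥0, LipschitzOnWith K (fun q => fderiv ℝ g q) s)
    (θ θ' : ℝ → EuclideanSpace ℝ (Fin p)) (θ₀ : EuclideanSpace ℝ (Fin p))
    (hθ0 : θ 0 = θ₀)
    (hθd : ∀ t ≥ (0:ℝ), HasDerivAt θ (θ' t) t)
    (hθcont : ContinuousOn θ' (Set.Ici 0))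
    (hflow : ∀ t ≥ (0:ℝ), θ' t = -gradient (fun q => L (F (g q))) (θ t))
    (r₀ : ℝ) (hr₀ : L (F (g (θ 0))) < r₀)
    (ψ ψ' : ℝ → ℝ) (hψ0 : ψ 0 = 0)
    (hψcont : ContinuousOn ψ (Set.Ico 0 r₀))
    (hψmono : StrictMonoOn ψ (Set.Ico 0 r₀))
    (hψd : ∀ s ∈ Set.Ioo (0:ℝ) r₀, HasDerivAt ψ (ψ' s) s)
    (hKL : ∀ v : EuclideanSpace ℝ (Fin m), 0 < L v → L v < r₀ →
      1 ≤ ψ' (L v) * ‖gradient L v‖)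
    (σF : ℝ) (hσF : 0 < σF)
    (hinj : ∀ t ≥ (0:ℝ),
      gradient L (F (g (θ t))) ∈ LinearMap.range (fderiv ℝ F (g (θ t)) :
          EuclideanSpace ℝ (Fin n) →ₗ[ℝ] EuclideanSpace ℝ (Fin m)) ∧
      ∀ z ∈ LinearMap.range (fderiv ℝ F (g (θ t)) :
          EuclideanSpace ℝ (Fin n) →ₗ[ℝ] EuclideanSpace ℝ (Fin m)),
        σF * ‖z‖ ≤ ‖ContinuousLinearMap.adjoint (fderiv ℝ F (g (θ t))) z‖)
    (σ₀ : ℝ) (hσ₀ : σ₀ = sigmaMin (fderiv ℝ g θ₀)) (hσ₀pos : 0 < σ₀)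
    (hσt : ∀ t ≥ (0:ℝ), σ₀ / 2 ≤ sigmaMin (fderiv ℝ g (θ t))) :
    (∀ t ≥ (0:ℝ),
      (∫ s in (0:ℝ)..t, ‖θ' s‖) ≤
        2 / (σ₀ * σF) * (ψ (L (F (g (θ 0)))) - ψ (L (F (g (θ t))))) ∧
      2 / (σ₀ * σF) * (ψ (L (F (g (θ 0)))) - ψ (L (F (g (θ t))))) ≤
        2 / (σ₀ * σF) * ψ (L (F (g (θ 0))))) ∧
    MeasureTheory.IntegrableOn (fun s => ‖θ' s‖) (Set.Ici 0) ∧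
    ∃ θlim : EuclideanSpace ℝ (Fin p), Tendsto θ atTop (𝓝 θlim) :=
  stmt2_general L F g hL hLnonneg hF hg θ θ' hθd hθcont hflow r₀ hr₀ ψ ψ' hψ0 hψcont hψmono hψd hKL
    σF hσF hinj σ₀ hσ₀pos hσt
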